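/- Let c₁ > 0, c₂ ∈ ℝ, K > 0. Then ∫₀^∞ e^{−Kξ} N(c₁ξ^{−1/2} + c₂ξ^{1/2}) dξ = (1/K) − (1/(2K))·(1 − c₂/√(c₂² + 2K))·e^{−c₁(√(c₂² + 2K) + c₂)}, where N is the standard normal CDF. -/

import Mathlib

/-!
Write `1 - N(x)` as the Gaussian tail `(2π)^{-1/2} ∫_x^∞ e^{-t²/2} dt` and substitute
`t = x + s/√ξ`. The resulting integrand in `(ξ, s)` is nonnegative with `s`-integral at most
`√(2π) e^{-Kξ}`, so Fubini applies, and with `a = c₁ + s`, `l = √(c₂² + 2K)` the `ξ`-integral is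
`e^{-c₂ a} ∫₀^∞ ξ^{-1/2} E(ξ) dξ`, `E(ξ) = e^{-a²/(2ξ) - l²ξ/2}`.
This inverse-Gaussian integral equals `√(2π) e^{-a l} / l`: with `P = l ξ^{-1/2} E` and
`Q = a ξ^{-3/2} E`, the inversion `ξ ↦ a²/(l²ξ)` maps `P dξ` to `Q dξ`, while
`(P + Q) / 2 = ψ' e^{-al} e^{-ψ²/2}` for the increasing bijection `ψ ξ = l√ξ - a/√ξ` of `(0, ∞)`
onto `ℝ`, so `∫ (P + Q)` is a Gaussian integral. The remaining `s`-integral is elementary.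
-/

open Real Set MeasureTheory

/-- The standard normal cumulative distribution function. -/
noncomputable def stdNormalCDF (x : ℝ) : ℝ :=
  (Real.sqrt (2 * Real.pi))⁻¹ * ∫ t in Set.Iic x, Real.exp (-t ^ 2 / 2)

lemma integrable_exp_neg_sq_div_two : Integrable fun t : ℝ => exp (-t ^ 2 / 2) := by
  simpa [neg_div, div_eq_inv_mul] using integrable_exp_neg_mul_sq (b := 1 / 2) (by norm_num)

lemma integral_exp_neg_sq_div_two : ∫ t : ℝ, exp (-t ^ 2 / 2) = √(2 * π) := by
  simpa [neg_div, div_eq_inv_mul, div_inv_eq_mul, mul_comm] using integral_gaussian (1 / 2)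

lemma setIntegral_exp_neg_sq_div_two_le (s : Set ℝ) : ∫ t in s, exp (-t ^ 2 / 2) ≤ √(2 * π) :=
  integral_exp_neg_sq_div_two ▸ setIntegral_le_integral integrable_exp_neg_sq_div_two
    (.of_forall fun _ => (exp_pos _).le)

lemma stdNormalCDF_eq_one_sub (x : ℝ) :
    stdNormalCDF x = 1 - (√(2 * π))⁻¹ * ∫ t in Ioi x, exp (-t ^ 2 / 2) := by
  have hsplit := intervalIntegral.integral_Iic_add_Ioi (b := x)
    integrable_exp_neg_sq_div_two.integrableOn integrable_exp_neg_sq_div_two.integrableOn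
  rw [integral_exp_neg_sq_div_two, ← eq_sub_iff_add_eq] at hsplit
  rw [stdNormalCDF, hsplit, mul_sub, inv_mul_cancel₀ (by positivity)]

section ChangeOfVariables

variable {E : Type*} [NormedAddCommGroup E]

theorem integral_Ioi_comp_add_right [NormedSpace ℝ E] (f : ℝ → E) (x : ℝ) :
    ∫ s in Ioi 0, f (s + x) = ∫ t in Ioi x, f t := by
  simpa [preimage_add_const_Ioi] using
    (measurePreserving_add_right volume x).setIntegral_preimage_emb
      (measurableEmbedding_addRight x) f (Ioi x)

theorem integrableOn_Ioi_comp_add_right_iff (f : ℝ → E) (x : ℝ) :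
    IntegrableOn (fun s => f (s + x)) (Ioi 0) ↔ IntegrableOn f (Ioi x) := by
  simpa [preimage_add_const_Ioi, Function.comp_def] using
    (measurePreserving_add_right volume x).integrableOn_comp_preimage
      (measurableEmbedding_addRight x) (f := f) (s := Ioi x)

theorem integral_Ioi_comp_div_add [NormedSpace ℝ E] (f : ℝ → E) {r : ℝ} (hr : 0 < r) (x : ℝ) :
    ∫ s in Ioi 0, f (s / r + x) = r • ∫ t in Ioi x, f t := by
  simpa [div_eq_inv_mul, integral_Ioi_comp_add_right] using
    integral_comp_mul_left_Ioi (fun u => f (u + x)) 0 (inv_pos.2 hr)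

theorem integrableOn_Ioi_comp_div_add_iff (f : ℝ → E) {r : ℝ} (hr : 0 < r) (x : ℝ) :
    IntegrableOn (fun s => f (s / r + x)) (Ioi 0) ↔ IntegrableOn f (Ioi x) := by
  simpa [div_eq_inv_mul, integrableOn_Ioi_comp_add_right_iff] using
    integrableOn_Ioi_comp_mul_left_iff (fun u => f (u + x)) 0 (inv_pos.2 hr)

theorem integral_Ioi_comp_const_div [NormedSpace ℝ E] (f : ℝ → E) {c : ℝ} (hc : 0 < c) :
    ∫ x in Ioi 0, (c / x ^ 2) • f (c / x) = ∫ y in Ioi 0, f y := by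
  have h := integral_comp_mul_left_Ioi' f 0 hc
  rw [mul_zero] at h
  rw [← h, ← integral_comp_rpow_Ioi (fun y => f (c * y)) (p := -1) (by norm_num), ← integral_smul]
  refine setIntegral_congr_fun measurableSet_Ioi fun x hx => ?_
  have hx : 0 < x := hx
  rw [smul_smul, rpow_neg_one, show (-1 : ℝ) - 1 = -2 by norm_num, rpow_neg hx.le]
  norm_num [div_eq_mul_inv]

end ChangeOfVariables

lemma sq_div_sqrt_add_mul_sqrt (x y : ℝ) {ξ : ℝ} (hξ : 0 < ξ) :
    (x / √ξ + y * √ξ) ^ 2 = x ^ 2 / ξ + 2 * x * y + y ^ 2 * ξ := by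
  have hs : √ξ ≠ 0 := (sqrt_pos.2 hξ).ne'
  field_simp
  rw [sq_sqrt hξ.le]
  ring

noncomputable def invGaussKernel (a l ξ : ℝ) : ℝ := exp (-(a ^ 2 / (2 * ξ) + l ^ 2 * ξ / 2))

section InverseGaussian

variable {a l : ℝ}

lemma hasDerivAt_mul_sqrt_sub_div_sqrt (a l : ℝ) {ξ : ℝ} (hξ : 0 < ξ) :
    HasDerivAt (fun x => l * √x - a / √x) ((l / √ξ + a / (ξ * √ξ)) / 2) ξ := by
  have hs : √ξ ≠ 0 := (sqrt_pos.2 hξ).ne'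
  have h : HasDerivAt (fun x => l * √x - a * (√x)⁻¹)
      (l * (1 / (2 * √ξ)) - a * (-(1 / (2 * √ξ)) / √ξ ^ 2)) ξ :=
    ((hasDerivAt_sqrt hξ.ne').const_mul l).sub (((hasDerivAt_sqrt hξ.ne').inv hs).const_mul a)
  simp only [← div_eq_mul_inv] at h
  convert h using 1
  rw [sq_sqrt hξ.le]
  field_simp
  ring

lemma strictMonoOn_mul_sqrt_sub_div_sqrt (ha : 0 ≤ a) (hl : 0 < l) :
    StrictMonoOn (fun x => l * √x - a / √x) (Ioi 0) := by
  intro x hx y _ hxy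
  have hsx : 0 < √x := sqrt_pos.2 hx
  have hsxy : √x < √y := sqrt_lt_sqrt (le_of_lt hx) hxy
  have : a / √y ≤ a / √x := div_le_div_of_nonneg_left ha hsx hsxy.le
  dsimp only
  nlinarith

lemma image_mul_sqrt_sub_div_sqrt_Ioi (ha : 0 < a) (hl : 0 < l) :
    (fun x => l * √x - a / √x) '' Ioi 0 = univ := by
  refine eq_univ_of_forall fun y => ?_
  set D := √(y ^ 2 + 4 * a * l)
  have hD : D ^ 2 = y ^ 2 + 4 * a * l := sq_sqrt (by positivity)
  -- `√x = u` must be the positive root of `l u² - y u - a = 0`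
  set u := (y + D) / (2 * l)
  have hu : 0 < u := div_pos (by nlinarith [sqrt_nonneg (y ^ 2 + 4 * a * l)]) (by positivity)
  have hroot : l * u ^ 2 - y * u - a = 0 := by
    simp only [u]; field_simp; nlinarith
  refine ⟨u ^ 2, pow_pos hu 2, ?_⟩
  dsimp only
  rw [sqrt_sq hu.le]
  field_simp
  linarith

lemma exp_neg_sq_mul_sqrt_sub_div_sqrt {ξ : ℝ} (hξ : 0 < ξ) :
    exp (-(l * √ξ - a / √ξ) ^ 2 / 2) = exp (a * l) * invGaussKernel a l ξ := by
  rw [invGaussKernel, ← exp_add, show l * √ξ - a / √ξ = -a / √ξ + l * √ξ by ring,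
    sq_div_sqrt_add_mul_sqrt _ _ hξ]
  congr 1
  ring

lemma abs_deriv_smul_exp_neg_sq_mul_sqrt_sub_div_sqrt (ha : 0 ≤ a) (hl : 0 ≤ l) {ξ : ℝ}
    (hξ : 0 < ξ) :
    |(l / √ξ + a / (ξ * √ξ)) / 2| • exp (-(l * √ξ - a / √ξ) ^ 2 / 2)
      = exp (a * l) / 2 * ((l / √ξ + a / (ξ * √ξ)) * invGaussKernel a l ξ) := by
  rw [abs_of_nonneg (by positivity), smul_eq_mul, exp_neg_sq_mul_sqrt_sub_div_sqrt hξ]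
  ring

lemma integrableOn_div_sqrt_add_mul_invGaussKernel (ha : 0 < a) (hl : 0 < l) :
    IntegrableOn (fun ξ => (l / √ξ + a / (ξ * √ξ)) * invGaussKernel a l ξ) (Ioi 0) := by
  have h := integrableOn_image_iff_integrableOn_abs_deriv_smul measurableSet_Ioi
    (fun ξ hξ => (hasDerivAt_mul_sqrt_sub_div_sqrt a l hξ).hasDerivWithinAt)
    (strictMonoOn_mul_sqrt_sub_div_sqrt ha.le hl).injOn fun t => exp (-t ^ 2 / 2)
  rw [image_mul_sqrt_sub_div_sqrt_Ioi ha hl, integrableOn_univ] at h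
  refine IntegrableOn.congr_fun ((h.1 integrable_exp_neg_sq_div_two).const_mul (2 / exp (a * l)))
    (fun ξ hξ => ?_) measurableSet_Ioi
  rw [abs_deriv_smul_exp_neg_sq_mul_sqrt_sub_div_sqrt ha.le hl.le hξ]
  field_simp

lemma integral_div_sqrt_add_mul_invGaussKernel (ha : 0 < a) (hl : 0 < l) :
    ∫ ξ in Ioi 0, (l / √ξ + a / (ξ * √ξ)) * invGaussKernel a l ξ
      = 2 * √(2 * π) * exp (-(a * l)) := by
  have h := integral_image_eq_integral_abs_deriv_smul measurableSet_Ioi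
    (fun ξ hξ => (hasDerivAt_mul_sqrt_sub_div_sqrt a l hξ).hasDerivWithinAt)
    (strictMonoOn_mul_sqrt_sub_div_sqrt ha.le hl).injOn fun t => exp (-t ^ 2 / 2)
  rw [image_mul_sqrt_sub_div_sqrt_Ioi ha hl, Measure.restrict_univ, integral_exp_neg_sq_div_two,
    setIntegral_congr_fun measurableSet_Ioi
      fun ξ hξ => abs_deriv_smul_exp_neg_sq_mul_sqrt_sub_div_sqrt ha.le hl.le hξ,
    integral_const_mul] at h
  rw [h, exp_neg]
  field_simp

lemma const_div_sq_mul_invGaussKernel_const_div (ha : 0 < a) (hl : 0 < l) {ξ : ℝ} (hξ : 0 < ξ) :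
    a ^ 2 / l ^ 2 / ξ ^ 2 * (l / √(a ^ 2 / l ^ 2 / ξ) * invGaussKernel a l (a ^ 2 / l ^ 2 / ξ))
      = a / (ξ * √ξ) * invGaussKernel a l ξ := by
  have hsqrt : √(a ^ 2 / l ^ 2 / ξ) = a / (l * √ξ) := by
    rw [sqrt_div' _ hξ.le, sqrt_div' _ (by positivity), sqrt_sq ha.le, sqrt_sq hl.le, div_div]
  have hs : 0 < √ξ := sqrt_pos.2 hξ
  rw [hsqrt, invGaussKernel, invGaussKernel]
  have hE : a ^ 2 / (2 * (a ^ 2 / l ^ 2 / ξ)) + l ^ 2 * (a ^ 2 / l ^ 2 / ξ) / 2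
      = a ^ 2 / (2 * ξ) + l ^ 2 * ξ / 2 := by
    field_simp
    ring
  rw [hE]
  field_simp
  exact sq_sqrt hξ.le

lemma integral_inv_sqrt_mul_invGaussKernel (ha : 0 < a) (hl : 0 < l) :
    ∫ ξ in Ioi 0, (√ξ)⁻¹ * invGaussKernel a l ξ = √(2 * π) * exp (-(a * l)) / l := by
  set P := fun ξ => l / √ξ * invGaussKernel a l ξ
  set Q := fun ξ => a / (ξ * √ξ) * invGaussKernel a l ξ
  have hPQ := integrableOn_div_sqrt_add_mul_invGaussKernel ha hl
  simp only [add_mul] at hPQ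
  have hP : IntegrableOn P (Ioi 0) := by
    refine hPQ.mono' (by unfold P invGaussKernel; fun_prop) ?_
    refine (ae_restrict_iff' measurableSet_Ioi).2 (.of_forall fun ξ (hξ : 0 < ξ) => ?_)
    rw [norm_of_nonneg (by unfold P invGaussKernel; positivity)]
    have : 0 ≤ a / (ξ * √ξ) * invGaussKernel a l ξ := by unfold invGaussKernel; positivity
    linarith
  have hQ : IntegrableOn Q (Ioi 0) :=
    (hPQ.sub hP).congr_fun (fun ξ _ => add_sub_cancel_left _ _) measurableSet_Ioi
  have hQP : ∫ ξ in Ioi 0, Q ξ = ∫ ξ in Ioi 0, P ξ := by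
    rw [← integral_Ioi_comp_const_div P (c := a ^ 2 / l ^ 2) (by positivity)]
    exact setIntegral_congr_fun measurableSet_Ioi fun ξ hξ =>
      (const_div_sq_mul_invGaussKernel_const_div ha hl hξ).symm
  have hsum := integral_div_sqrt_add_mul_invGaussKernel ha hl
  simp only [add_mul] at hsum
  rw [integral_add hP hQ, hQP] at hsum
  simp only [P, div_eq_mul_inv l, mul_assoc] at hsum
  rw [integral_const_mul] at hsum
  rw [eq_div_iff hl.ne']
  linear_combination hsum / 2

end InverseGaussian

noncomputable def tailKernel (c₁ c₂ K ξ s : ℝ) : ℝ :=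
  exp (-K * ξ) * ((√ξ)⁻¹ * exp (-((s + c₁) / √ξ + c₂ * √ξ) ^ 2 / 2))

section TailKernel

variable {c₁ c₂ K : ℝ}

lemma integrableOn_tailKernel_ds (c₁ c₂ K : ℝ) {ξ : ℝ} (hξ : 0 < ξ) :
    IntegrableOn (tailKernel c₁ c₂ K ξ) (Ioi 0) := by
  have h := (integrableOn_Ioi_comp_div_add_iff (fun t => exp (-t ^ 2 / 2)) (sqrt_pos.2 hξ)
    (c₁ / √ξ + c₂ * √ξ)).2 integrable_exp_neg_sq_div_two.integrableOn
  simp only [← add_assoc, ← add_div] at h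
  exact (h.const_mul (√ξ)⁻¹).const_mul (exp (-K * ξ))

lemma integral_tailKernel_ds (c₁ c₂ K : ℝ) {ξ : ℝ} (hξ : 0 < ξ) :
    ∫ s in Ioi 0, tailKernel c₁ c₂ K ξ s
      = exp (-K * ξ) * ∫ t in Ioi (c₁ / √ξ + c₂ * √ξ), exp (-t ^ 2 / 2) := by
  have h := integral_Ioi_comp_div_add (fun t => exp (-t ^ 2 / 2)) (sqrt_pos.2 hξ)
    (c₁ / √ξ + c₂ * √ξ)
  simp only [← add_assoc, ← add_div, smul_eq_mul] at h
  simp only [tailKernel, integral_const_mul, h, inv_mul_cancel_left₀ (sqrt_pos.2 hξ).ne']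

lemma exp_neg_mul_mul_exp_neg_sq_div_sqrt_add_mul_sqrt {l : ℝ} (hl : l ^ 2 = c₂ ^ 2 + 2 * K)
    (b : ℝ) {ξ : ℝ} (hξ : 0 < ξ) :
    exp (-K * ξ) * exp (-(b / √ξ + c₂ * √ξ) ^ 2 / 2) = exp (-(c₂ * b)) * invGaussKernel b l ξ := by
  rw [invGaussKernel, ← exp_add, ← exp_add, sq_div_sqrt_add_mul_sqrt _ _ hξ, hl]
  congr 1
  field_simp
  ring

lemma integral_tailKernel_dξ {l : ℝ} (hl₀ : 0 < l) (hl : l ^ 2 = c₂ ^ 2 + 2 * K) {s : ℝ}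
    (hs : 0 < s + c₁) :
    ∫ ξ in Ioi 0, tailKernel c₁ c₂ K ξ s = √(2 * π) / l * exp (-(l + c₂) * (s + c₁)) := by
  have h : ∀ ξ ∈ Ioi (0 : ℝ), tailKernel c₁ c₂ K ξ s
      = exp (-(c₂ * (s + c₁))) * ((√ξ)⁻¹ * invGaussKernel (s + c₁) l ξ) := fun ξ hξ => by
    rw [tailKernel, mul_left_comm, exp_neg_mul_mul_exp_neg_sq_div_sqrt_add_mul_sqrt hl _ hξ]
    ring
  rw [setIntegral_congr_fun measurableSet_Ioi h, integral_const_mul,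
    integral_inv_sqrt_mul_invGaussKernel hs hl₀,
    show -(l + c₂) * (s + c₁) = -(c₂ * (s + c₁)) + -((s + c₁) * l) by ring, exp_add]
  ring

lemma integrable_tailKernel (c₁ c₂ : ℝ) (hK : 0 < K) :
    Integrable (Function.uncurry (tailKernel c₁ c₂ K))
      ((volume.restrict (Ioi 0)).prod (volume.restrict (Ioi 0))) := by
  have hG : AEStronglyMeasurable (Function.uncurry (tailKernel c₁ c₂ K))
      ((volume.restrict (Ioi 0)).prod (volume.restrict (Ioi 0))) := by
    unfold tailKernel Function.uncurry
    fun_prop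
  refine (integrable_prod_iff hG).2 ⟨?_, ?_⟩
  · exact (ae_restrict_iff' measurableSet_Ioi).2
      (.of_forall fun ξ hξ => integrableOn_tailKernel_ds c₁ c₂ K hξ)
  · refine ((exp_neg_integrableOn_Ioi 0 hK).const_mul (√(2 * π))).mono'
      hG.norm.integral_prod_right' ?_
    refine (ae_restrict_iff' measurableSet_Ioi).2 (.of_forall fun ξ (hξ : 0 < ξ) => ?_)
    have hnn : ∀ s, 0 ≤ tailKernel c₁ c₂ K ξ s := fun s => by unfold tailKernel; positivity
    simp only [Function.uncurry_apply_pair, norm_of_nonneg (hnn _)]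
    rw [norm_of_nonneg (integral_nonneg hnn), integral_tailKernel_ds c₁ c₂ K hξ, neg_mul, mul_comm]
    gcongr
    exact setIntegral_exp_neg_sq_div_two_le _

end TailKernel

/-- For `c₁ > 0`, `c₂ ∈ ℝ`, `K > 0`:
`∫₀^∞ e^{−Kξ} N(c₁ξ^{−1/2} + c₂ξ^{1/2}) dξ
  = 1/K − (1/(2K))·(1 − c₂/√(c₂²+2K))·e^{−c₁(√(c₂²+2K)+c₂)}`. -/
theorem integral_exp_stdNormalCDF_two_powers
    (c₁ c₂ K : ℝ) (hc₁ : 0 < c₁) (hK : 0 < K) :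
    ∫ ξ in Set.Ioi (0 : ℝ),
        Real.exp (-K * ξ) * stdNormalCDF (c₁ / Real.sqrt ξ + c₂ * Real.sqrt ξ)
      = 1 / K - (1 / (2 * K)) * (1 - c₂ / Real.sqrt (c₂ ^ 2 + 2 * K)) *
          Real.exp (-c₁ * (Real.sqrt (c₂ ^ 2 + 2 * K) + c₂)) := by
  set l := √(c₂ ^ 2 + 2 * K)
  have hl₀ : 0 < l := sqrt_pos.2 (by positivity)
  have hl : l ^ 2 = c₂ ^ 2 + 2 * K := sq_sqrt (by positivity)
  have hlc₂ : 0 < l + c₂ := by nlinarith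
  have hG := integrable_tailKernel c₁ c₂ hK
  have hF : IntegrableOn (fun ξ => ∫ s in Ioi 0, tailKernel c₁ c₂ K ξ s) (Ioi 0) :=
    hG.integral_prod_left
  have hN : ∀ ξ ∈ Ioi (0 : ℝ), exp (-K * ξ) * stdNormalCDF (c₁ / √ξ + c₂ * √ξ)
      = exp (-K * ξ) - (√(2 * π))⁻¹ * ∫ s in Ioi 0, tailKernel c₁ c₂ K ξ s := fun ξ hξ => by
    rw [stdNormalCDF_eq_one_sub, integral_tailKernel_ds c₁ c₂ K hξ]
    ring
  rw [setIntegral_congr_fun measurableSet_Ioi hN,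
    integral_sub (exp_neg_integrableOn_Ioi 0 hK) (hF.const_mul _),
    integral_const_mul, integral_integral_swap hG,
    setIntegral_congr_fun measurableSet_Ioi fun s (hs : 0 < s) =>
      integral_tailKernel_dξ hl₀ hl (by linarith : 0 < s + c₁),
    integral_const_mul, integral_Ioi_comp_add_right (fun t => exp (-(l + c₂) * t)),
    integral_exp_mul_Ioi (by linarith), integral_exp_mul_Ioi (by linarith)]
  have h2K : (l - c₂) * (l + c₂) = 2 * K := by linear_combination hl
  rw [mul_zero, exp_zero]
  field_simp
  linear_combination exp (-((l + c₂) * c₁)) * h2K
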